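/- Let σ_W = |φ⁺⟩⟨φ⁺| and σ_F = (1/2)(|φ⁺⟩⟨φ⁺| + |φ⁻⟩⟨φ⁻|) be density matrices on ℂ⁴, and let E₁ = 1 − |φ⁺⟩⟨φ⁺| (with 1 the 4×4 identity). Then Tr(E₁σ_W) = 0 (so Wigner's quantum Bayesian update on the outcome X = 1 is undefined), whereas Tr(E₁σ_F) = 1/2 and the Friend's update is (√σ_F · E₁ · √σ_F)/Tr(E₁σ_F) = |φ⁻⟩⟨φ⁻|. -/

import Mathlib

open Matrix
open scoped ComplexOrder

noncomputable section

/-- The positive semidefinite square root, as `Matrix.PosSemidef.sqrt` was defined in older Mathlib. -/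
def Matrix.PosSemidef.sqrt {n 𝕜 : Type*} [Fintype n] [DecidableEq n] [RCLike 𝕜]
    {A : Matrix n n 𝕜} (hA : A.PosSemidef) : Matrix n n 𝕜 :=
  hA.1.eigenvectorUnitary.1 * diagonal ((↑) ∘ (√·) ∘ hA.1.eigenvalues) *
    (star hA.1.eigenvectorUnitary : Matrix n n 𝕜)

/-- Computational basis vector `|ab⟩` of ℂ² ⊗ ℂ². -/
def ket (a b : Fin 2) : Fin 2 × Fin 2 → ℂ := fun p => if p = (a, b) then 1 else 0

/-- The Bell states `|φ⁺⟩` and `|φ⁻⟩`. -/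
def φp : Fin 2 × Fin 2 → ℂ := (Real.sqrt 2 : ℂ)⁻¹ • (ket 0 0 + ket 1 1)
def φm : Fin 2 × Fin 2 → ℂ := (Real.sqrt 2 : ℂ)⁻¹ • (ket 0 0 - ket 1 1)

/-- Outer product `|v⟩⟨v|`. -/
def proj (v : Fin 2 × Fin 2 → ℂ) : Matrix (Fin 2 × Fin 2) (Fin 2 × Fin 2) ℂ :=
  vecMulVec v (star v)

/-- Wigner's state `σ_W = |φ⁺⟩⟨φ⁺|`. -/
def σW : Matrix (Fin 2 × Fin 2) (Fin 2 × Fin 2) ℂ := proj φp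

/-- The Friend's state `σ_F = (1/2)(|φ⁺⟩⟨φ⁺| + |φ⁻⟩⟨φ⁻|)`. -/
def σF : Matrix (Fin 2 × Fin 2) (Fin 2 × Fin 2) ℂ := (1 / 2 : ℂ) • (proj φp + proj φm)

/-- The likelihood operator `E₁ = 1 − |φ⁺⟩⟨φ⁺|` for the outcome `X = 1`. -/
def E₁ : Matrix (Fin 2 × Fin 2) (Fin 2 × Fin 2) ℂ := 1 - proj φp

/-! ### Auxiliary lemmas -/

lemma sqrt2_sq : ((Real.sqrt 2 : ℂ))⁻¹ * ((Real.sqrt 2 : ℂ))⁻¹ = 1/2 := by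
  rw [← mul_inv, ← Complex.ofReal_mul, Real.mul_self_sqrt (by norm_num)]
  norm_num

lemma vmv_mul {n : Type*} [Fintype n] (v w x y : n → ℂ) :
    vecMulVec v w * vecMulVec x y = (w ⬝ᵥ x) • vecMulVec v y := by
  ext i j
  simp only [vecMulVec, mul_apply, dotProduct, Matrix.smul_apply, of_apply, smul_eq_mul,
    Finset.sum_mul]
  exact Finset.sum_congr rfl fun k _ => by ring

lemma dot_pp : star φp ⬝ᵥ φp = 1 := by
  simp [φp, ket, dotProduct, Fintype.sum_prod_type, Fin.sum_univ_two]
  rw [sqrt2_sq]; norm_num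

lemma dot_mm : star φm ⬝ᵥ φm = 1 := by
  simp [φm, ket, dotProduct, Fintype.sum_prod_type, Fin.sum_univ_two]
  rw [sqrt2_sq]; norm_num

lemma dot_pm : star φp ⬝ᵥ φm = 0 := by
  simp [φp, φm, ket, dotProduct, Fintype.sum_prod_type, Fin.sum_univ_two]

lemma dot_mp : star φm ⬝ᵥ φp = 0 := by
  simp [φp, φm, ket, dotProduct, Fintype.sum_prod_type, Fin.sum_univ_two]

lemma proj_mul_proj (u v : Fin 2 × Fin 2 → ℂ) :
    proj u * proj v = (star u ⬝ᵥ v) • vecMulVec u (star v) := by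
  rw [proj, proj, vmv_mul]

lemma pp_mul_pp : proj φp * proj φp = proj φp := by
  rw [proj_mul_proj, dot_pp, one_smul, proj]

lemma pm_mul_pm : proj φm * proj φm = proj φm := by
  rw [proj_mul_proj, dot_mm, one_smul, proj]

lemma pp_mul_pm : proj φp * proj φm = 0 := by
  rw [proj_mul_proj, dot_pm, zero_smul]

lemma pm_mul_pp : proj φm * proj φp = 0 := by
  rw [proj_mul_proj, dot_mp, zero_smul]

lemma trace_proj (v : Fin 2 × Fin 2 → ℂ) : (proj v).trace = star v ⬝ᵥ v := by
  simp [proj, trace, vecMulVec, diag, dotProduct, mul_comm]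

lemma proj_posSemidef (v : Fin 2 × Fin 2 → ℂ) : (proj v).PosSemidef := by
  rw [proj, vecMulVec_eq Unit, ← conjTranspose_replicateCol]
  exact posSemidef_self_mul_conjTranspose _

lemma psd_smul {M : Matrix (Fin 2 × Fin 2) (Fin 2 × Fin 2) ℂ} (hM : M.PosSemidef)
    {c : ℂ} (hc : 0 ≤ c) : (c • M).PosSemidef := by
  constructor
  · rw [IsHermitian, conjTranspose_smul, hM.1, (IsSelfAdjoint.of_nonneg hc : star c = c)]
  · intro x
    exact (hM.smul hc).2 x

lemma half_nonneg : (0 : ℂ) ≤ 1/2 := by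
  rw [show (1/2 : ℂ) = ((1/2 : ℝ) : ℂ) by norm_num]
  exact Complex.zero_le_real.mpr (by norm_num)

lemma invsqrt2_nonneg : (0 : ℂ) ≤ ((Real.sqrt 2 : ℂ))⁻¹ := by
  rw [← Complex.ofReal_inv]
  exact Complex.zero_le_real.mpr (by positivity)

lemma σF_posSemidef : σF.PosSemidef :=
  psd_smul ((proj_posSemidef φp).add (proj_posSemidef φm)) half_nonneg

/-- The square root of σF. -/
def B : Matrix (Fin 2 × Fin 2) (Fin 2 × Fin 2) ℂ :=
  ((Real.sqrt 2 : ℂ))⁻¹ • (proj φp + proj φm)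

lemma B_posSemidef : B.PosSemidef :=
  psd_smul ((proj_posSemidef φp).add (proj_posSemidef φm)) invsqrt2_nonneg

lemma B_sq : B ^ 2 = σF := by
  rw [pow_two, B, σF, smul_mul_assoc, mul_smul_comm, smul_smul, sqrt2_sq]
  congr 1
  rw [add_mul, mul_add, mul_add, pp_mul_pp, pm_mul_pm, pp_mul_pm, pm_mul_pp]
  simp

lemma trace_E1_σF : (E₁ * σF).trace = 1 / 2 := by
  rw [E₁, σF, sub_mul, one_mul, Matrix.mul_smul, mul_add, pp_mul_pp, pp_mul_pm, add_zero,
    smul_add, add_sub_cancel_left]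
  rw [trace_smul, trace_proj, dot_mm]
  simp

/-- On the outcome `X = 1`, Wigner's update is undefined (`Tr(E₁σ_W) = 0`),
while the Friend's update is defined and yields `|φ⁻⟩⟨φ⁻|`. -/
theorem quantum_disagreement_on_outcome_one :
    (E₁ * σW).trace = 0 ∧
    (E₁ * σF).trace = 1 / 2 ∧
    (∃ hF : σF.PosSemidef,
      ((E₁ * σF).trace)⁻¹ • (hF.sqrt * E₁ * hF.sqrt) = proj φm) := by
  refine ⟨?_, trace_E1_σF, σF_posSemidef, ?_⟩
  · rw [E₁, σW, sub_mul, one_mul, pp_mul_pp, sub_self, trace_zero]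
  · have hsqrt : σF_posSemidef.sqrt = B := by
      open scoped MatrixOrder in
      have h1 : σF_posSemidef.sqrt = σF_posSemidef.1.cfc Real.sqrt := by
        simp [Matrix.PosSemidef.sqrt, Matrix.IsHermitian.cfc]
      open scoped MatrixOrder in
      rw [h1, ← σF_posSemidef.1.cfc_eq, show cfc Real.sqrt σF = CFC.sqrt σF from by
        rw [CFC.sqrt_eq_cfc, cfc_nnreal_eq_real _ σF σF_posSemidef.nonneg]; congr 1; funext x; rw [Real.sqrt]]
      open scoped MatrixOrder in
      exact CFC.sqrt_unique (by rw [← pow_two, B_sq]) B_posSemidef.nonneg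
    rw [trace_E1_σF, hsqrt]
    have hBE : B * E₁ * B = (1/2 : ℂ) • proj φm := by
      rw [E₁, mul_sub, mul_one, sub_mul, ← pow_two, B_sq]
      rw [B, smul_mul_assoc, add_mul, pp_mul_pp, pm_mul_pp, add_zero, mul_smul_comm,
        smul_mul_assoc, smul_smul, sqrt2_sq]
      rw [mul_add, pp_mul_pp, pp_mul_pm, add_zero, σF, smul_add, add_sub_cancel_left]
    rw [hBE, smul_smul]
    norm_num
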